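/- Let H be a d-regular graph on vertex set [h] (d ≥ 2), fix n ≥ 1, L ≥ 20, and a pattern (a,e). If U ⊆ V(Γ) satisfies conditions (LD1) and (LD2), then for every (i,w) ∈ U, Σ_{(i′,w′)∈N_{Γ_LD}(i,w)∩U} (a_{i,w}a_{i′,w′}/n)·(1 + ε_{i,w,i′,w′}/2)·log(1 + ε_{i,w,i′,w′}) ≥ (L/4)·a_{i,w}·log(en/a_{i,w}). -/

import Mathlib

open scoped BigOperators
open scoped Classical

namespace RandomLifts

noncomputable section

/-- Probability of an event under the uniform measure on a finite type. -/
def unifProb {Ω : Type*} [Fintype Ω] (p : Ω → Prop) : ℝ :=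
  letI := Classical.decPred p
  ((Finset.univ.filter p).card : ℝ) / (Fintype.card Ω : ℝ)

/-- The sample space of a random `n`-lift of a graph on `Fin h`: an
independent, uniformly random permutation for each (ordered) pair of fibres
(only the permutations attached to pairs `i < i'` with `i ~ i'` are used). -/
abbrev LiftSpace (h n : ℕ) := Fin h → Fin h → Equiv.Perm (Fin n)

/-- The `n`-lift of `H` determined by the matchings `ω`. -/
def liftGraph {h n : ℕ} (H : SimpleGraph (Fin h)) (ω : LiftSpace h n) :
    SimpleGraph (Fin h × Fin n) where
  Adj u v := H.Adj u.1 v.1 ∧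
    ((u.1 < v.1 ∧ v.2 = ω u.1 v.1 u.2) ∨ (v.1 < u.1 ∧ u.2 = ω v.1 u.1 v.2))
  symm := by
    constructor
    intro u v huv
    exact ⟨huv.1.symm, huv.2.symm⟩
  loopless := by
    constructor
    intro u hu
    exact H.loopless.irrefl u.1 hu.1

/-- The adjacency matrix of a graph, with real entries. -/
def adjMat {V : Type*} (G : SimpleGraph V) : Matrix V V ℝ :=
  fun u v => if G.Adj u v then 1 else 0

/-- The largest eigenvalue of (the adjacency matrix of) a graph on a finite
vertex set. -/
def lambdaMax {V : Type*} [Fintype V] (G : SimpleGraph V) : ℝ :=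
  sSup {μ : ℝ | ∃ x : V → ℝ, x ≠ 0 ∧ (adjMat G).mulVec x = μ • x}

/-- `λ*(G)`: the largest absolute value of a *new* eigenvalue of a lift,
i.e. of an eigenvalue admitting an eigenvector balanced on every fibre. -/
def lambdaStar {h n : ℕ} (G : SimpleGraph (Fin h × Fin n)) : ℝ :=
  sSup {r : ℝ | ∃ (μ : ℝ) (x : Fin h × Fin n → ℝ), x ≠ 0 ∧
    (adjMat G).mulVec x = μ • x ∧ (∀ i : Fin h, ∑ j : Fin n, x (i, j) = 0) ∧ r = |μ|}

/-- The matrix `M̄` of edge probabilities. -/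
def Mbar (h n : ℕ) (H : SimpleGraph (Fin h)) :
    Matrix (Fin h × Fin n) (Fin h × Fin n) ℝ :=
  fun u v => if H.Adj u.1 v.1 then 1 / (n : ℝ) else 0

/-- `N = M − M̄`. -/
def Nmat {h n : ℕ} (H : SimpleGraph (Fin h)) (G : SimpleGraph (Fin h × Fin n)) :
    Matrix (Fin h × Fin n) (Fin h × Fin n) ℝ :=
  adjMat G - Mbar h n H

/-- `⟨x,x⟩_A`. -/
def quadForm {V : Type*} [Fintype V] (A : Matrix V V ℝ) (x : V → ℝ) : ℝ :=
  ∑ u, ∑ v, x u * A u v * x v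

/-- `⟨x,x⟩_{A,E}`: the quadratic form restricted to pairs of entries lying in
`E ⊆ ℝ²`. -/
def quadFormOn {V : Type*} [Fintype V] (A : Matrix V V ℝ) (E : Set (ℝ × ℝ))
    (x : V → ℝ) : ℝ :=
  ∑ u, ∑ v, if (x u, x v) ∈ E then x u * A u v * x v else 0

/-- The set `E* = {(x₁,x₂) : x₁,x₂ > 0, d^{-1/2} < x₁/x₂ < d^{1/2}}`. -/
def Estar (d : ℕ) : Set (ℝ × ℝ) :=
  {p | 0 < p.1 ∧ 0 < p.2 ∧ (Real.sqrt d)⁻¹ < p.1 / p.2 ∧ p.1 / p.2 < Real.sqrt d}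

/-- `D^{>0} = {2^i/√(nh) : i ≥ 1}`. -/
def Dpos (n h : ℕ) : Set ℝ := {w | ∃ i : ℕ, 1 ≤ i ∧ w = 2 ^ i / Real.sqrt (n * h)}

/-- `D⁺ = {0} ∪ D^{>0}`. -/
def Dplus (n h : ℕ) : Set ℝ := insert 0 (Dpos n h)

/-- Membership in the set `Z` of dyadic test vectors. -/
def memZ (d h n : ℕ) (x : Fin h × Fin n → ℝ) : Prop :=
  (∑ v, x v ^ 2) ≤ 10 ∧ (∀ v, x v ∈ Dplus n h) ∧
    ∀ u v, x v ≠ 0 → x u ≤ (d : ℝ) * x v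

/-- A `Z`-type. -/
def IsZType (d h n : ℕ) (a : Fin h → ℝ → ℕ) : Prop :=
  (∀ i w, a i w ≠ 0 → w ∈ Dplus n h) ∧
  (∀ i, (∑ᶠ w : ℝ, a i w) ≤ n) ∧
  (∃ w₀ ∈ Dpos n h, ∀ i w, a i w ≠ 0 → w₀ ≤ w ∧ w ≤ w₀ * d) ∧
  ((∑ i : Fin h, ∑ᶠ w : ℝ, w ^ 2 * (a i w : ℝ)) ≤ 10)

/-- A pattern `(a,e)`. -/
def IsPattern (d h n : ℕ) (H : SimpleGraph (Fin h)) (a : Fin h → ℝ → ℕ)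
    (e : Fin h → ℝ → Fin h → ℝ → ℕ) : Prop :=
  IsZType d h n a ∧
  (∀ i w i' w', e i w i' w' = e i' w' i w) ∧
  (∀ i w i' w', e i w i' w' ≤ min (a i w) (a i' w')) ∧
  (∀ i w i' w', ¬H.Adj i i' → e i w i' w' = 0)

/-- The adjacency relation of the graph `Γ`. -/
def gammaAdj (d h n : ℕ) (H : SimpleGraph (Fin h)) (p q : Fin h × ℝ) : Prop :=
  H.Adj p.1 q.1 ∧ p.2 ∈ Dpos n h ∧ q.2 ∈ Dpos n h ∧
    (Real.sqrt d)⁻¹ < p.2 / q.2 ∧ p.2 / q.2 < Real.sqrt d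

/-- The summand `w w' (e_{i,w,i',w'} − a_{i,w}a_{i',w'}/n)` appearing in the
potency, for an ordered pair of `Γ`-adjacent vertices. -/
def potTerm (d h n : ℕ) (H : SimpleGraph (Fin h)) (a : Fin h → ℝ → ℕ)
    (e : Fin h → ℝ → Fin h → ℝ → ℕ) (p q : Fin h × ℝ) : ℝ :=
  if gammaAdj d h n H p q then
    p.2 * q.2 * ((e p.1 p.2 q.1 q.2 : ℝ) - (a p.1 p.2 : ℝ) * (a q.1 q.2 : ℝ) / n)
  else 0

/-- The potency `p(a,e)` of a pattern: the sum over unordered edges of `Γ`,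
realised as half of the sum over ordered pairs. -/
def potency (d h n : ℕ) (H : SimpleGraph (Fin h)) (a : Fin h → ℝ → ℕ)
    (e : Fin h → ℝ → Fin h → ℝ → ℕ) : ℝ :=
  |(1 / 2 : ℝ) * ∑ i : Fin h, ∑ i' : Fin h, ∑ᶠ w : ℝ, ∑ᶠ w' : ℝ,
      potTerm d h n H a e (i, w) (i', w')|

/-- The maximal potency `p̃(a,e)` over subsets of the edges of `Γ`. -/
def potencyTilde (d h n : ℕ) (H : SimpleGraph (Fin h)) (a : Fin h → ℝ → ℕ)
    (e : Fin h → ℝ → Fin h → ℝ → ℕ) : ℝ :=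
  sSup {r : ℝ | ∃ E : Set ((Fin h × ℝ) × (Fin h × ℝ)),
    (∀ pq ∈ E, gammaAdj d h n H pq.1 pq.2) ∧
    (∀ p q, (p, q) ∈ E → (q, p) ∈ E) ∧
    r = |(1 / 2 : ℝ) * ∑ i : Fin h, ∑ i' : Fin h, ∑ᶠ w : ℝ, ∑ᶠ w' : ℝ,
        (if ((i, w), (i', w')) ∈ E then potTerm d h n H a e (i, w) (i', w') else 0)|}

/-- The type of the sub-pattern `(a,e)_S`, first component. -/
def restrictA {h : ℕ} (S : Set (Fin h × ℝ)) (a : Fin h → ℝ → ℕ) :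
    Fin h → ℝ → ℕ :=
  fun i w => if (i, w) ∈ S then a i w else 0

/-- The edge counts of the sub-pattern `(a,e)_S`, second component. -/
def restrictE {h : ℕ} (S : Set (Fin h × ℝ)) (e : Fin h → ℝ → Fin h → ℝ → ℕ) :
    Fin h → ℝ → Fin h → ℝ → ℕ :=
  fun i w i' w' => if (i, w) ∈ S ∧ (i', w') ∈ S then e i w i' w' else 0

/-- `A_{i,w}(y) = {v ∈ V_i : y_v = w}`. -/
def Aset {h n : ℕ} (y : Fin h × Fin n → ℝ) (i : Fin h) (w : ℝ) :
    Finset (Fin h × Fin n) :=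
  letI := Classical.decPred fun v : Fin h × Fin n => v.1 = i ∧ y v = w
  Finset.univ.filter fun v => v.1 = i ∧ y v = w

/-- The number of edges of `G` between the sets `A` and `B`. -/
def edgeCount {h n : ℕ} (G : SimpleGraph (Fin h × Fin n))
    (A B : Finset (Fin h × Fin n)) : ℕ :=
  letI := Classical.decPred fun pq : (Fin h × Fin n) × (Fin h × Fin n) => G.Adj pq.1 pq.2
  ((A ×ˢ B).filter fun pq => G.Adj pq.1 pq.2).card

/-- The pattern `(a,e)` can be found in `G` (with some witness `y ∈ Z`). -/
def canFind (d h n : ℕ) (H : SimpleGraph (Fin h)) (G : SimpleGraph (Fin h × Fin n))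
    (a : Fin h → ℝ → ℕ) (e : Fin h → ℝ → Fin h → ℝ → ℕ) : Prop :=
  ∃ y : Fin h × Fin n → ℝ, memZ d h n y ∧
    (∀ i : Fin h, ∀ w ∈ Dpos n h, a i w = (Aset y i w).card) ∧
    (∀ i w i' w', H.Adj i i' → w ∈ Dpos n h → w' ∈ Dpos n h →
      e i w i' w' = edgeCount G (Aset y i w) (Aset y i' w'))

/-- The normalised deviation `ε_{i,w,i',w'}` of a pattern. -/
def epsP {h : ℕ} (n : ℕ) (a : Fin h → ℝ → ℕ) (e : Fin h → ℝ → Fin h → ℝ → ℕ)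
    (p q : Fin h × ℝ) : ℝ :=
  if a p.1 p.2 = 0 ∨ a q.1 q.2 = 0 then 1
  else (e p.1 p.2 q.1 q.2 : ℝ) / ((a p.1 p.2 : ℝ) * (a q.1 q.2 : ℝ) / n) - 1

/-- `b(ε) = (1+ε)log(1+ε) − ε` (with `b(−1)=1`, automatic as `log 0 = 0`). -/
def bFun (x : ℝ) : ℝ := (1 + x) * Real.log (1 + x) - x

/-- The adjacency relation of the large-deviations graph `Γ_LD`. -/
def gammaLDAdj (d h n : ℕ) (H : SimpleGraph (Fin h)) (a : Fin h → ℝ → ℕ)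
    (e : Fin h → ℝ → Fin h → ℝ → ℕ) (p q : Fin h × ℝ) : Prop :=
  gammaAdj d h n H p q ∧ Real.exp 2 - 1 < epsP n a e p q

/-- The adjacency relation of the small-deviations graph `Γ_SD`. -/
def gammaSDAdj (d h n : ℕ) (H : SimpleGraph (Fin h)) (a : Fin h → ℝ → ℕ)
    (e : Fin h → ℝ → Fin h → ℝ → ℕ) (p q : Fin h × ℝ) : Prop :=
  gammaAdj d h n H p q ∧ epsP n a e p q ≤ Real.exp 2 - 1

/-- The summand `w w' (a_{i,w}a_{i',w'}/n) ε_{i,w,i',w'}` over `Γ_LD`. -/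
def potTermLD (d h n : ℕ) (H : SimpleGraph (Fin h)) (a : Fin h → ℝ → ℕ)
    (e : Fin h → ℝ → Fin h → ℝ → ℕ) (p q : Fin h × ℝ) : ℝ :=
  if gammaLDAdj d h n H a e p q then
    p.2 * q.2 * ((a p.1 p.2 : ℝ) * (a q.1 q.2 : ℝ) / n) * epsP n a e p q
  else 0

/-- The summand `w w' (a_{i,w}a_{i',w'}/n) ε_{i,w,i',w'}` over `Γ_SD`. -/
def potTermSD (d h n : ℕ) (H : SimpleGraph (Fin h)) (a : Fin h → ℝ → ℕ)
    (e : Fin h → ℝ → Fin h → ℝ → ℕ) (p q : Fin h × ℝ) : ℝ :=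
  if gammaSDAdj d h n H a e p q then
    p.2 * q.2 * ((a p.1 p.2 : ℝ) * (a q.1 q.2 : ℝ) / n) * epsP n a e p q
  else 0

/-- The large-deviations potency `p_LD(a,e)`. -/
def pLD (d h n : ℕ) (H : SimpleGraph (Fin h)) (a : Fin h → ℝ → ℕ)
    (e : Fin h → ℝ → Fin h → ℝ → ℕ) : ℝ :=
  |(1 / 2 : ℝ) * ∑ i : Fin h, ∑ i' : Fin h, ∑ᶠ w : ℝ, ∑ᶠ w' : ℝ,
      potTermLD d h n H a e (i, w) (i', w')|

/-- The small-deviations potency `p_SD(a,e)`. -/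
def pSD (d h n : ℕ) (H : SimpleGraph (Fin h)) (a : Fin h → ℝ → ℕ)
    (e : Fin h → ℝ → Fin h → ℝ → ℕ) : ℝ :=
  |(1 / 2 : ℝ) * ∑ i : Fin h, ∑ i' : Fin h, ∑ᶠ w : ℝ, ∑ᶠ w' : ℝ,
      potTermSD d h n H a e (i, w) (i', w')|

/-- The local large-deviations potency `p_LD((a,e);(i,w))`. -/
def pLDlocal (d h n : ℕ) (H : SimpleGraph (Fin h)) (a : Fin h → ℝ → ℕ)
    (e : Fin h → ℝ → Fin h → ℝ → ℕ) (p : Fin h × ℝ) : ℝ :=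
  |∑ i' : Fin h, ∑ᶠ w' : ℝ, potTermLD d h n H a e p (i', w')|

/-- The weighted neighbourhood mass `N̂_{i,w}(a,e)`. -/
def Nhat (d h n : ℕ) (H : SimpleGraph (Fin h)) (a : Fin h → ℝ → ℕ)
    (p : Fin h × ℝ) : ℝ :=
  ∑ i' : Fin h, ∑ᶠ w' : ℝ,
    (if gammaAdj d h n H p (i', w') then
      w' ^ 2 * (a i' w' : ℝ) * (w' / (p.2 * Real.sqrt d)) else 0)

/-- Condition (LD1) for a set `U ⊆ V(Γ)`. -/
def condLD1 (d h n : ℕ) (H : SimpleGraph (Fin h)) (L : ℝ) (a : Fin h → ℝ → ℕ)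
    (e : Fin h → ℝ → Fin h → ℝ → ℕ) (U : Set (Fin h × ℝ)) : Prop :=
  ∀ p ∈ U, L * (a p.1 p.2 : ℝ) * p.2 ^ 2 * Real.sqrt d ≤
    pLDlocal d h n H (restrictA U a) (restrictE U e) p

/-- Condition (LD2) for a set `U ⊆ V(Γ)`. -/
def condLD2 (d h n : ℕ) (H : SimpleGraph (Fin h)) (L : ℝ) (a : Fin h → ℝ → ℕ)
    (e : Fin h → ℝ → Fin h → ℝ → ℕ) (U : Set (Fin h × ℝ)) : Prop :=
  ∀ p ∈ U, L * Nhat d h n H a p / Real.sqrt d ≤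
    pLDlocal d h n H (restrictA U a) (restrictE U e) p

/-- `Π_{(i,w)∈S, a_{i,w}≥1} a_{i,w}^{d/4}`. -/
def prodA {h : ℕ} (d : ℕ) (S : Set (Fin h × ℝ)) (a : Fin h → ℝ → ℕ) : ℝ :=
  ∏ᶠ (p : Fin h × ℝ) (_ : p ∈ S ∧ 1 ≤ a p.1 p.2),
    ((a p.1 p.2 : ℝ) ^ ((d : ℝ) / 4))

/-- `Π_{(i,w)∈S, a_{i,w}≥1} C(n, min(a_{i,w}, ⌊n/2⌋))`. -/
def prodChoose {h : ℕ} (n : ℕ) (S : Set (Fin h × ℝ)) (a : Fin h → ℝ → ℕ) : ℝ :=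
  ∏ᶠ (p : Fin h × ℝ) (_ : p ∈ S ∧ 1 ≤ a p.1 p.2),
    ((n.choose (min (a p.1 p.2) (n / 2)) : ℝ))

/-- The number of matching edges between `A` and `B` under the bijection `M`. -/
def matchCount {n : ℕ} (M : Equiv.Perm (Fin n)) (A B : Finset (Fin n)) : ℕ :=
  (A.filter fun v => M v ∈ B).card

end

end RandomLifts

/-!
Fix `p = (i, w) ∈ U` with `a_p > 0` and put `ℓ = log (e n / a_p)`, `u = w' / (w √d) < 1`,
`μ = a_p a_q / n` for the `Γ_LD`-neighbours `q = (i', w')` in `U`. Dividing (LD1) and (LD2) by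
`w² √d`, they read `L a_p ≤ S` and `L Σ a_q u³ ≤ S` with `S = Σ μ u ε`; moreover
`e² < 1 + ε ≤ n / a_p` since `e_{p,q} ≤ a_q`. If `ℓ ≤ 4`, (LD1) suffices because
`ε ≤ (1 + ε/2) log (1 + ε)` once `log (1 + ε) ≥ 2`. Otherwise AM–GM in `u`, together with
`log x / √x` decreasing beyond `e²`, gives termwise
`ℓ/2 · μ u ε ≤ μ (1 + ε)/2 · log (1 + ε) + ℓ L / 4 · a_q u³`; summing and absorbing the `u³`
terms with (LD2) leaves `ℓ S / 4 ≤ Σ μ (1 + ε/2) log (1 + ε)`, and (LD1) concludes.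
-/

open Real Finset

lemma sq_log_mul_le_of_exp_two_le {x y : ℝ} (hx : exp 2 ≤ x) (hxy : x ≤ y) :
    log y ^ 2 * x ≤ log x ^ 2 * y := by
  have hx0 : 0 < x := (exp_pos 2).trans_le hx
  have hanti := log_div_sqrt_antitoneOn (Set.mem_Ici.2 hx) (Set.mem_Ici.2 (hx.trans hxy)) hxy
  rw [div_le_div_iff₀ (sqrt_pos.2 (hx0.trans_le hxy)) (sqrt_pos.2 hx0)] at hanti
  have hlogy : 0 ≤ log y := log_nonneg ((one_le_exp two_pos.le).trans (hx.trans hxy))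
  have h := pow_le_pow_left₀ (by positivity) hanti 2
  rwa [mul_pow, mul_pow, sq_sqrt hx0.le, sq_sqrt (hx0.le.trans hxy)] at h

lemma three_mul_sq_mul_le {s u : ℝ} (hs : 0 ≤ s) (hu : 0 ≤ u) :
    3 * s ^ 2 * u ≤ u ^ 3 + 2 * s ^ 3 := by
  nlinarith [mul_nonneg (sq_nonneg (u - s)) (by linarith : 0 ≤ u + 2 * s)]

lemma mul_le_mul_log_add_of_exp_two_lt {L R ε u : ℝ} (hL : 20 ≤ L) (hR : 3 ≤ log R)
    (hε : exp 2 - 1 < ε) (hεR : 1 + ε ≤ R) (hu : 0 ≤ u) :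
    (1 + log R) / 2 * u * ε ≤
      (1 + ε) / 2 * log (1 + ε) + (1 + log R) * L * R / 4 * u ^ 3 := by
  have hρ : exp 2 ≤ 1 + ε := by linarith
  have hε0 : 0 ≤ ε := by linarith [add_one_le_exp (2 : ℝ)]
  have hR0 : 0 < R := (exp_pos 2).trans_le (hρ.trans hεR)
  have hlogρ : 2 ≤ log (1 + ε) := (le_log_iff_exp_le (by linarith)).2 hρ
  -- this choice of `s` makes `3 s² u ≤ u³ + 2 s³` (AM–GM) reproduce the left-hand side
  set s := √(2 * ε / (3 * L * R))
  have hs0 : 0 ≤ s := sqrt_nonneg _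
  have hs2 : s ^ 2 * (3 * L * R) = 2 * ε := by
    rw [sq_sqrt (by positivity)]; field_simp
  have hℓs : (1 + log R) * s ≤ 3 / 2 * log (1 + ε) := by
    refine (pow_le_pow_iff_left₀ (by positivity) (by positivity) two_ne_zero).1 ?_
    have hsq : 2 * ε * (1 + log R) ^ 2 ≤ 5 * R * log (1 + ε) ^ 2 := by
      nlinarith [sq_log_mul_le_of_exp_two_le hρ hεR, sq_nonneg (1 - log R),
        mul_le_mul_of_nonneg_right hεR (sq_nonneg (log R)),
        mul_le_mul_of_nonneg_left (pow_le_pow_left₀ (by norm_num) hlogρ 2) hR0.le]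
    have hLR : 0 < 3 * L * R := by positivity
    rw [mul_pow, ← mul_le_mul_iff_of_pos_right hLR, mul_assoc, hs2]
    nlinarith [mul_le_mul_of_nonneg_right hL (mul_nonneg hR0.le (sq_nonneg (log (1 + ε))))]
  have hamgm := mul_le_mul_of_nonneg_left (three_mul_sq_mul_le hs0 hu)
    (by positivity : 0 ≤ (1 + log R) * L * R / 4)
  calc (1 + log R) / 2 * u * ε = (1 + log R) * L * R / 4 * (3 * s ^ 2 * u) := by
        linear_combination (-(1 + log R) * u / 4) * hs2
    _ ≤ (1 + log R) * L * R / 4 * (u ^ 3 + 2 * s ^ 3) := hamgm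
    _ = (1 + log R) * s * ε / 3 + (1 + log R) * L * R / 4 * u ^ 3 := by
        linear_combination ((1 + log R) * s / 6) * hs2
    _ ≤ (1 + ε) / 2 * log (1 + ε) + (1 + log R) * L * R / 4 * u ^ 3 := by
        nlinarith [mul_le_mul_of_nonneg_right hℓs hε0]

lemma mul_log_le_sum_of_potency_bounds {ι : Type*} (s : Finset ι) {L A R : ℝ}
    {μ u ε b : ι → ℝ} (hL : 20 ≤ L) (hA : 0 ≤ A) (hμ : ∀ q ∈ s, 0 ≤ μ q)
    (hμR : ∀ q ∈ s, μ q * R = b q) (hu : ∀ q ∈ s, 0 ≤ u q ∧ u q ≤ 1)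
    (hε : ∀ q ∈ s, exp 2 - 1 < ε q ∧ 1 + ε q ≤ R)
    (hLD1 : L * A ≤ ∑ q ∈ s, μ q * u q * ε q)
    (hLD2 : L * ∑ q ∈ s, b q * u q ^ 3 ≤ ∑ q ∈ s, μ q * u q * ε q) :
    L / 4 * A * (1 + log R) ≤ ∑ q ∈ s, μ q * ((1 + ε q / 2) * log (1 + ε q)) := by
  have hlog : ∀ q ∈ s, 2 ≤ log (1 + ε q) := fun q hq =>
    (le_log_iff_exp_le (by linarith [exp_pos 2, (hε q hq).1])).2 (by linarith [(hε q hq).1])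
  have hε0 : ∀ q ∈ s, 0 ≤ ε q := fun q hq => by
    linarith [add_one_le_exp (2 : ℝ), (hε q hq).1]
  rcases le_or_gt (1 + log R) 4 with hR | hR
  · have hterm : ∀ q ∈ s, μ q * u q * ε q ≤ μ q * ((1 + ε q / 2) * log (1 + ε q)) := by
      intro q hq
      have hεlog : ε q ≤ (1 + ε q / 2) * log (1 + ε q) := by
        nlinarith [hlog q hq, hε0 q hq]
      have := mul_le_of_le_one_left (hε0 q hq) (hu q hq).2
      calc μ q * u q * ε q = μ q * (u q * ε q) := mul_assoc _ _ _
        _ ≤ μ q * ((1 + ε q / 2) * log (1 + ε q)) :=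
          mul_le_mul_of_nonneg_left (this.trans hεlog) (hμ q hq)
    have := sum_le_sum hterm
    nlinarith [mul_le_mul_of_nonneg_left hR (by positivity : 0 ≤ L / 4 * A)]
  · have hterm : ∀ q ∈ s, (1 + log R) / 2 * (μ q * u q * ε q) ≤
        μ q * ((1 + ε q / 2) * log (1 + ε q)) + (1 + log R) / 4 * L * (b q * u q ^ 3) := by
      intro q hq
      have hpt := mul_le_mul_of_nonneg_left (mul_le_mul_log_add_of_exp_two_lt hL (by linarith)
        (hε q hq).1 (hε q hq).2 (hu q hq).1) (hμ q hq)
      rw [← hμR q hq]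
      nlinarith [mul_nonneg (hμ q hq) (by linarith [hlog q hq] : (0:ℝ) ≤ log (1 + ε q))]
    have := sum_le_sum hterm
    rw [← mul_sum, sum_add_distrib, ← mul_sum] at this
    nlinarith [mul_le_mul_of_nonneg_left hLD2 (by linarith : 0 ≤ (1 + log R) / 4),
      mul_le_mul_of_nonneg_left hLD1 (by linarith : 0 ≤ (1 + log R) / 4)]

lemma sum_finsum_ite_eq_sum_filter {α β M : Type*} [Fintype α] [AddCommMonoid M]
    (P : α × β → Prop) [DecidablePred P] (f : α × β → M) (F : Finset β)
    (hF : ∀ a b, P (a, b) → f (a, b) ≠ 0 → b ∈ F) :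
    ∑ a, ∑ᶠ b, (if P (a, b) then f (a, b) else 0) = ∑ q ∈ (univ ×ˢ F).filter P, f q := by
  rw [sum_filter, sum_product]
  refine sum_congr rfl fun a _ => finsum_eq_sum_of_support_subset _ fun b hb => ?_
  by_cases hP : P (a, b)
  · exact hF a b hP (by simpa [hP] using hb)
  · simp [hP] at hb

namespace RandomLifts

variable {d h n : ℕ} {H : SimpleGraph (Fin h)} {a : Fin h → ℝ → ℕ}
  {e : Fin h → ℝ → Fin h → ℝ → ℕ} {U : Set (Fin h × ℝ)} {p : Fin h × ℝ} {F : Finset ℝ}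

lemma sqrt_natCast_mul_pos (hn : 0 < n) (hh : 0 < h) : 0 < √((n : ℝ) * h) :=
  sqrt_pos.2 (by positivity)

lemma pos_of_mem_Dpos {w : ℝ} (hn : 0 < n) (hh : 0 < h) (hw : w ∈ Dpos n h) : 0 < w := by
  obtain ⟨k, -, rfl⟩ := hw
  exact div_pos (by positivity) (sqrt_natCast_mul_pos hn hh)

lemma IsZType.pos_of_ne_zero (hZ : IsZType d h n a) (hn : 0 < n) {i : Fin h} {w : ℝ}
    (hw : a i w ≠ 0) : 0 < w := by
  obtain ⟨-, -, ⟨w₀, hw₀, hwin⟩, -⟩ := hZ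
  exact (pos_of_mem_Dpos hn i.pos hw₀).trans_le (hwin i w hw).1

lemma IsZType.exists_finset_weights (hZ : IsZType d h n a) (hn : 0 < n) :
    ∃ F : Finset ℝ, ∀ i w, a i w ≠ 0 → w ∈ F := by
  rcases Nat.eq_zero_or_pos h with rfl | hh
  · exact ⟨∅, fun i => i.elim0⟩
  obtain ⟨hD, -, ⟨w₀, -, hwin⟩, -⟩ := id hZ
  set c := √((n : ℝ) * h)
  obtain ⟨K, hK⟩ := pow_unbounded_of_one_lt (w₀ * d * c) (one_lt_two (α := ℝ))
  refine ⟨(range K).image fun k => (2 : ℝ) ^ k / c, fun i w hw => ?_⟩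
  have hwpos := hZ.pos_of_ne_zero hn hw
  obtain ⟨k, -, rfl⟩ := (hD i w hw).resolve_left hwpos.ne'
  refine mem_image.2 ⟨k, mem_range.2 ?_, rfl⟩
  have hc := sqrt_natCast_mul_pos hn hh
  have : (2 : ℝ) ^ k ≤ w₀ * d * c := (div_le_iff₀ hc).1 (hwin i _ hw).2
  exact (pow_lt_pow_iff_right₀ one_lt_two).1 (this.trans_lt hK)

lemma ne_zero_of_exp_two_sub_one_lt_epsP {p q : Fin h × ℝ}
    (hε : exp 2 - 1 < epsP n a e p q) : a q.1 q.2 ≠ 0 := by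
  intro hq
  simp only [epsP, hq, or_true, if_true] at hε
  linarith [add_one_le_exp (2 : ℝ)]

lemma one_add_epsP_le {p q : Fin h × ℝ} (hle : e p.1 p.2 q.1 q.2 ≤ a q.1 q.2)
    (hp : a p.1 p.2 ≠ 0) (hq : a q.1 q.2 ≠ 0) : 1 + epsP n a e p q ≤ n / a p.1 p.2 := by
  have hp0 : (0 : ℝ) < a p.1 p.2 := by positivity
  have hq0 : (0 : ℝ) < a q.1 q.2 := by positivity
  simp only [epsP, hp, hq, or_self, if_false, add_sub_cancel, div_div_eq_mul_div]
  rw [div_le_div_iff₀ (by positivity) hp0]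
  have : (e p.1 p.2 q.1 q.2 : ℝ) ≤ a q.1 q.2 := by exact_mod_cast hle
  nlinarith [mul_le_mul_of_nonneg_right this (by positivity : (0 : ℝ) ≤ n * a p.1 p.2)]

lemma potTermLD_restrict (hp : p ∈ U) (q : Fin h × ℝ) :
    potTermLD d h n H (restrictA U a) (restrictE U e) p q =
      if q ∈ U then potTermLD d h n H a e p q else 0 := by
  by_cases hq : q ∈ U
  · simp [potTermLD, gammaLDAdj, epsP, restrictA, restrictE, hp, hq]
  · rw [if_neg hq, potTermLD, if_neg]
    exact fun hLD => ne_zero_of_exp_two_sub_one_lt_epsP hLD.2 (by simp [restrictA, hq])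

lemma gammaAdj.weight_bounds (hn : 0 < n) {q : Fin h × ℝ} (hq : gammaAdj d h n H p q) :
    0 < p.2 ∧ 0 < q.2 ∧ q.2 < p.2 * √d := by
  obtain ⟨-, hp, hq, hlo, hhi⟩ := hq
  have hp0 := pos_of_mem_Dpos hn p.1.pos hp
  have hq0 := pos_of_mem_Dpos hn p.1.pos hq
  have hd : 0 < √(d : ℝ) := (div_pos hp0 hq0).trans hhi
  refine ⟨hp0, hq0, ?_⟩
  rw [mul_comm, ← inv_mul_lt_iff₀ hd]
  exact (lt_div_iff₀ hq0).1 hlo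

lemma pLDlocal_restrict_eq_sum (hn : 0 < n) (hp : p ∈ U) (hF : ∀ i w, a i w ≠ 0 → w ∈ F) :
    pLDlocal d h n H (restrictA U a) (restrictE U e) p =
      p.2 ^ 2 * √d * ∑ q ∈ (univ ×ˢ F).filter (fun q => gammaLDAdj d h n H a e p q ∧ q ∈ U),
        (a p.1 p.2 : ℝ) * a q.1 q.2 / n * (q.2 / (p.2 * √d)) * epsP n a e p q := by
  have hterm : ∀ q, potTermLD d h n H (restrictA U a) (restrictE U e) p q =
      if gammaLDAdj d h n H a e p q ∧ q ∈ U then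
        p.2 * q.2 * ((a p.1 p.2 : ℝ) * a q.1 q.2 / n) * epsP n a e p q else 0 := by
    intro q
    rw [potTermLD_restrict hp, potTermLD]
    by_cases hq : q ∈ U <;> simp [hq]
  have hsum : ∑ i', ∑ᶠ w', potTermLD d h n H (restrictA U a) (restrictE U e) p (i', w') =
      ∑ q ∈ (univ ×ˢ F).filter (fun q => gammaLDAdj d h n H a e p q ∧ q ∈ U),
        p.2 * q.2 * ((a p.1 p.2 : ℝ) * a q.1 q.2 / n) * epsP n a e p q := by
    simp only [hterm]
    refine sum_finsum_ite_eq_sum_filter (fun q => gammaLDAdj d h n H a e p q ∧ q ∈ U)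
      (fun q => p.2 * q.2 * ((a p.1 p.2 : ℝ) * a q.1 q.2 / n) * epsP n a e p q) F
      fun i w hq _ => ?_
    exact hF i w (ne_zero_of_exp_two_sub_one_lt_epsP hq.1.2)
  have hbounds : ∀ q ∈ (univ ×ˢ F).filter (fun q => gammaLDAdj d h n H a e p q ∧ q ∈ U),
      0 < p.2 ∧ 0 < q.2 ∧ 0 < √(d : ℝ) ∧ 0 ≤ epsP n a e p q := fun q hq => by
    obtain ⟨⟨hΓ, hε⟩, -⟩ := (mem_filter.1 hq).2
    obtain ⟨hp0, hq0, hlt⟩ := hΓ.weight_bounds hn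
    exact ⟨hp0, hq0, (mul_pos_iff_of_pos_left hp0).1 (hq0.trans hlt),
      by linarith [add_one_le_exp (2 : ℝ)]⟩
  rw [pLDlocal, hsum, abs_of_nonneg (sum_nonneg fun q hq => by
    obtain ⟨hp0, hq0, -, hε0⟩ := hbounds q hq
    positivity), mul_sum]
  refine sum_congr rfl fun q hq => ?_
  obtain ⟨hp0, -, hd, -⟩ := hbounds q hq
  field_simp

lemma mul_sum_le_Nhat_div (hn : 0 < n) (hF : ∀ i w, a i w ≠ 0 → w ∈ F)
    (P : Fin h × ℝ → Prop) [DecidablePred P] (hP : ∀ q, P q → gammaAdj d h n H p q) :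
    p.2 ^ 2 * √d * ∑ q ∈ (univ ×ˢ F).filter P, (a q.1 q.2 : ℝ) * (q.2 / (p.2 * √d)) ^ 3 ≤
      Nhat d h n H a p / √d := by
  have hNhat : Nhat d h n H a p = ∑ q ∈ (univ ×ˢ F).filter (gammaAdj d h n H p),
      q.2 ^ 2 * a q.1 q.2 * (q.2 / (p.2 * √d)) := by
    refine sum_finsum_ite_eq_sum_filter (gammaAdj d h n H p)
      (fun q => q.2 ^ 2 * (a q.1 q.2 : ℝ) * (q.2 / (p.2 * √d))) F fun i w _ hw => hF i w ?_
    rintro h0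
    simp [h0] at hw
  have hbounds : ∀ q ∈ (univ ×ˢ F).filter (gammaAdj d h n H p), 0 < p.2 ∧ 0 < q.2 ∧ 0 < √(d : ℝ) :=
    fun q hq => by
      obtain ⟨hp0, hq0, hlt⟩ := (mem_filter.1 hq).2.weight_bounds hn
      exact ⟨hp0, hq0, (mul_pos_iff_of_pos_left hp0).1 (hq0.trans hlt)⟩
  have hsub := monotone_filter_right (univ ×ˢ F) fun q _ => hP q
  calc p.2 ^ 2 * √d * ∑ q ∈ (univ ×ˢ F).filter P, (a q.1 q.2 : ℝ) * (q.2 / (p.2 * √d)) ^ 3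
      = ∑ q ∈ (univ ×ˢ F).filter P, q.2 ^ 2 * a q.1 q.2 * (q.2 / (p.2 * √d)) / √d := by
        rw [mul_sum]
        refine sum_congr rfl fun q hq => ?_
        obtain ⟨hp0, -, hd⟩ := hbounds q (hsub hq)
        field_simp
    _ ≤ ∑ q ∈ (univ ×ˢ F).filter (gammaAdj d h n H p),
          q.2 ^ 2 * a q.1 q.2 * (q.2 / (p.2 * √d)) / √d :=
        sum_le_sum_of_subset_of_nonneg hsub fun q hq _ => by
          obtain ⟨hp0, hq0, hd⟩ := hbounds q hq
          positivity
    _ = Nhat d h n H a p / √d := by rw [hNhat, sum_div]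

theorem statement18_general (d h n : ℕ) (hd : 2 ≤ d) (hn : 1 ≤ n) (H : SimpleGraph (Fin h))
    (L : ℝ) (hL : 20 ≤ L)
    (a : Fin h → ℝ → ℕ) (e : Fin h → ℝ → Fin h → ℝ → ℕ)
    (hP : IsPattern d h n H a e)
    (U : Set (Fin h × ℝ))
    (h1 : condLD1 d h n H L a e U) (h2 : condLD2 d h n H L a e U) :
    ∀ p ∈ U,
      L / 4 * (a p.1 p.2 : ℝ) *
          Real.log (Real.exp 1 * (n : ℝ) / (a p.1 p.2 : ℝ)) ≤
        ∑ i' : Fin h, ∑ᶠ w' : ℝ,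
          (if gammaLDAdj d h n H a e p (i', w') ∧ (i', w') ∈ U then
            (a p.1 p.2 : ℝ) * (a i' w' : ℝ) / n *
              ((1 + epsP n a e p (i', w') / 2) *
                Real.log (1 + epsP n a e p (i', w')))
          else 0) := by
  obtain ⟨hZ, -, hle, -⟩ := hP
  intro p hp
  by_cases hA : a p.1 p.2 = 0
  · simp [hA]
  obtain ⟨F, hF⟩ := hZ.exists_finset_weights hn
  have hκ : 0 < p.2 ^ 2 * √d := by
    have := hZ.pos_of_ne_zero hn hA
    have : (0 : ℝ) < d := by exact_mod_cast (by omega : 0 < d)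
    positivity
  have hLD1 := h1 p hp
  have hN := mul_sum_le_Nhat_div (H := H) (p := p) hn hF
    (fun q => gammaLDAdj d h n H a e p q ∧ q ∈ U) fun q hq => hq.1.1
  have hLD2 := (mul_le_mul_of_nonneg_left hN (by linarith : 0 ≤ L)).trans
    ((mul_div_assoc _ _ _).symm.trans_le (h2 p hp))
  rw [pLDlocal_restrict_eq_sum hn hp hF] at hLD1 hLD2
  rw [sum_finsum_ite_eq_sum_filter (fun q => gammaLDAdj d h n H a e p q ∧ q ∈ U)
    (fun q => (a p.1 p.2 : ℝ) * a q.1 q.2 / n *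
      ((1 + epsP n a e p q / 2) * log (1 + epsP n a e p q))) F
    fun i w hq _ => hF i w (ne_zero_of_exp_two_sub_one_lt_epsP hq.1.2)]
  rw [mul_div_assoc, log_mul (exp_ne_zero 1) (by positivity), log_exp]
  refine mul_log_le_sum_of_potency_bounds _ hL (Nat.cast_nonneg _)
    (u := fun q => q.2 / (p.2 * √d)) (b := fun q => a q.1 q.2)
    (fun q _ => by positivity) (fun q _ => by field_simp) (fun q hq => ?_) (fun q hq => ?_)
    ((mul_le_mul_iff_right₀ hκ).1 (by linarith)) ((mul_le_mul_iff_right₀ hκ).1 (by linarith))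
  · obtain ⟨hp0, hq0, hlt⟩ := (mem_filter.1 hq).2.1.1.weight_bounds hn
    exact ⟨by positivity, div_le_one_of_le₀ hlt.le (by positivity)⟩
  · obtain ⟨hLD, -⟩ := (mem_filter.1 hq).2
    exact ⟨hLD.2, one_add_epsP_le ((hle _ _ _ _).trans (min_le_right _ _)) hA
      (ne_zero_of_exp_two_sub_one_lt_epsP hLD.2)⟩

theorem statement18 (d h n : ℕ) (hd : 2 ≤ d) (hn : 1 ≤ n) (H : SimpleGraph (Fin h))
    [DecidableRel H.Adj] (hreg : H.IsRegularOfDegree d) (L : ℝ) (hL : 20 ≤ L)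
    (a : Fin h → ℝ → ℕ) (e : Fin h → ℝ → Fin h → ℝ → ℕ)
    (hP : IsPattern d h n H a e)
    (U : Set (Fin h × ℝ))
    (h1 : condLD1 d h n H L a e U) (h2 : condLD2 d h n H L a e U) :
    ∀ p ∈ U,
      L / 4 * (a p.1 p.2 : ℝ) *
          Real.log (Real.exp 1 * (n : ℝ) / (a p.1 p.2 : ℝ)) ≤
        ∑ i' : Fin h, ∑ᶠ w' : ℝ,
          (if gammaLDAdj d h n H a e p (i', w') ∧ (i', w') ∈ U then
            (a p.1 p.2 : ℝ) * (a i' w' : ℝ) / n *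
              ((1 + epsP n a e p (i', w') / 2) *
                Real.log (1 + epsP n a e p (i', w')))
          else 0) :=
  statement18_general d h n hd hn H L hL a e hP U h1 h2

end RandomLifts
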